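/- Let n ≥ 1, let a < b, and let u : [a, b] → ℂ be n times continuously differentiable. Let p be the unique polynomial of degree at most n − 1 interpolating u at the n mapped Chebyshev nodes y_k = (a+b)/2 + ((b−a)/2)·cos((2k+1)π/(2n)), k = 0, …, n−1. Then for all x ∈ [a, b], |u(x) − p(x)| ≤ ((b − a)^n / (2^{2n−1} · n!)) · sup_{c ∈ (a,b)} |u^{(n)}(c)|. -/

import Mathlib

/-!
Fix `x ∈ [a, b]` and let `ω = ∏ₖ (X - yₖ)` be the nodal polynomial. Hahn–Banach gives a real
functional `L` of norm `≤ 1` with `L e(x) = ‖e(x)‖` for the error `e = u - p`. The real function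
`y ↦ ω(x) L e(y) - L e(x) ω(y)` vanishes at the `n` nodes and at `x`, so by `n`-fold Rolle its
`n`-th derivative `ω(x) L e⁽ⁿ⁾(c) - n! L e(x)` vanishes at some `c ∈ (a, b)`, while `e⁽ⁿ⁾ = u⁽ⁿ⁾`.
At the Chebyshev nodes `ω` is the monic Chebyshev polynomial `2^(1-n) Tₙ` rescaled to `[a, b]`,
hence `|ω| ≤ ((b - a) / 2)ⁿ 2^(1-n)` there.
-/

set_option autoImplicit false

noncomputable section

noncomputable def chebNode (n : ℕ) (a b : ℝ) (k : Fin n) : ℝ :=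
  (a + b) / 2 + ((b - a) / 2) * Real.cos ((2 * (k : ℝ) + 1) * Real.pi / (2 * n))

open Set Polynomial Lagrange

namespace Polynomial

theorem contDiff_eval {𝕜 : Type*} [NontriviallyNormedField 𝕜] (p : 𝕜[X]) (n : WithTop ℕ∞) :
    ContDiff 𝕜 n fun x => p.eval x :=
  p.contDiff_aeval n

theorem Monic.iterate_derivative_natDegree {R : Type*} [Semiring R] {p : R[X]}
    (hp : p.Monic) : derivative^[p.natDegree] p = C (p.natDegree.factorial : R) := by
  rw [eq_C_of_natDegree_le_zero ((natDegree_iterate_derivative p _).trans (Nat.sub_self _).le),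
    coeff_iterate_derivative, zero_add, hp.coeff_natDegree, Nat.descFactorial_self, nsmul_one]

theorem iteratedDeriv_eval {𝕜 : Type*} [NontriviallyNormedField 𝕜] (p : 𝕜[X]) (k : ℕ) :
    iteratedDeriv k (fun x => p.eval x) = fun x => (derivative^[k] p).eval x := by
  induction k generalizing p with
  | zero => rfl
  | succ k ih =>
    have hderiv : _root_.deriv (fun x => p.eval x) = fun x => p.derivative.eval x :=
      _root_.funext fun _ => p.deriv
    rw [iteratedDeriv_succ', hderiv, ih, Function.iterate_succ_apply]

theorem Monic.iteratedDerivWithin_natDegree_eval {𝕜 : Type*} [NontriviallyNormedField 𝕜]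
    {p : 𝕜[X]} (hp : p.Monic) {s : Set 𝕜} (hs : UniqueDiffOn 𝕜 s) {x : 𝕜} (hx : x ∈ s) :
    iteratedDerivWithin p.natDegree (fun y => p.eval y) s x = p.natDegree.factorial := by
  rw [iteratedDerivWithin_eq_iteratedDeriv hs (p.contDiff_eval _).contDiffAt hx,
    iteratedDeriv_eval, hp.iterate_derivative_natDegree]
  exact eval_C

theorem iteratedDeriv_eval_ofReal (p : ℂ[X]) (k : ℕ) :
    iteratedDeriv k (fun t : ℝ => p.eval (t : ℂ)) =
      fun t : ℝ => (derivative^[k] p).eval (t : ℂ) := by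
  induction k generalizing p with
  | zero => rfl
  | succ k ih =>
    have hderiv :
        _root_.deriv (fun t : ℝ => p.eval (t : ℂ)) = fun t : ℝ => p.derivative.eval (t : ℂ) :=
      _root_.funext fun t => ((p.hasDerivAt (t : ℂ)).comp_ofReal).deriv
    rw [iteratedDeriv_succ', hderiv, ih, Function.iterate_succ_apply]

theorem contDiff_eval_ofReal (p : ℂ[X]) {n : WithTop ℕ∞} :
    ContDiff ℝ n fun t : ℝ => p.eval (t : ℂ) :=
  ((p.contDiff_eval n).restrict_scalars ℝ).comp Complex.ofRealCLM.contDiff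

end Polynomial

theorem ContinuousLinearMap.iteratedDerivWithin_comp_left {𝕜 E F : Type*}
    [NontriviallyNormedField 𝕜] [NormedAddCommGroup E] [NormedSpace 𝕜 E] [NormedAddCommGroup F]
    [NormedSpace 𝕜 F] (L : E →L[𝕜] F) {f : 𝕜 → E} {s : Set 𝕜} {x : 𝕜} {n : ℕ}
    (hf : ContDiffWithinAt 𝕜 n f s x) (hs : UniqueDiffOn 𝕜 s) (hx : x ∈ s) :
    iteratedDerivWithin n (L ∘ f) s x = L (iteratedDerivWithin n f s x) := by
  simp only [iteratedDerivWithin, L.iteratedFDerivWithin_comp_left hf hs hx le_rfl]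
  rfl

section Rolle

variable {a b : ℝ}

theorem exists_strictMono_derivWithin_eq_zero {g : ℝ → ℝ} (hg : ContinuousOn g (Icc a b))
    {m : ℕ} {t : Fin (m + 2) → ℝ} (ht : StrictMono t) (htI : ∀ i, t i ∈ Icc a b)
    (hz : ∀ i, g (t i) = 0) :
    ∃ s : Fin (m + 1) → ℝ, StrictMono s ∧ (∀ i, s i ∈ Ioo a b) ∧
      ∀ i, derivWithin g (Icc a b) (s i) = 0 := by
  have hRolle : ∀ i : Fin (m + 1), ∃ c ∈ Ioo (t i.castSucc) (t i.succ), deriv g c = 0 := fun i =>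
    exists_deriv_eq_zero (ht i.castSucc_lt_succ)
      (hg.mono (Icc_subset_Icc (htI _).1 (htI _).2)) (by rw [hz, hz])
  choose s hs hs0 using hRolle
  have hsI : ∀ i, s i ∈ Ioo a b := fun i =>
    ⟨(htI i.castSucc).1.trans_lt (hs i).1, (hs i).2.trans_le (htI i.succ).2⟩
  refine ⟨s, Fin.strictMono_iff_lt_succ.2 fun i => ?_, hsI, fun i => ?_⟩
  · calc s i.castSucc < t i.castSucc.succ := (hs i.castSucc).2
      _ = t i.succ.castSucc := rfl
      _ < s i.succ := (hs i.succ).1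
  · rw [derivWithin_of_mem_nhds (Icc_mem_nhds (hsI i).1 (hsI i).2)]
    exact hs0 i

theorem exists_iteratedDerivWithin_eq_zero_of_strictMono (hab : a < b) :
    ∀ (m : ℕ) {g : ℝ → ℝ}, ContDiffOn ℝ (m + 1) g (Icc a b) → ∀ {t : Fin (m + 2) → ℝ},
      StrictMono t → (∀ i, t i ∈ Icc a b) → (∀ i, g (t i) = 0) →
      ∃ c ∈ Ioo a b, iteratedDerivWithin (m + 1) g (Icc a b) c = 0
  | 0, g, hg, t, ht, htI, hz => by
    obtain ⟨s, -, hsI, hs0⟩ := exists_strictMono_derivWithin_eq_zero hg.continuousOn ht htI hz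
    exact ⟨s 0, hsI 0, by rw [iteratedDerivWithin_one]; exact hs0 0⟩
  | m + 1, g, hg, t, ht, htI, hz => by
    obtain ⟨s, hs, hsI, hs0⟩ := exists_strictMono_derivWithin_eq_zero hg.continuousOn ht htI hz
    have hg' : ContDiffOn ℝ (m + 1) (derivWithin g (Icc a b)) (Icc a b) :=
      hg.derivWithin (uniqueDiffOn_Icc hab) (by norm_cast)
    obtain ⟨c, hc, hc0⟩ := exists_iteratedDerivWithin_eq_zero_of_strictMono hab m hg' hs
      (fun i => Ioo_subset_Icc_self (hsI i)) hs0
    exact ⟨c, hc, by rwa [iteratedDerivWithin_succ']⟩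

theorem exists_iteratedDerivWithin_eq_zero {n : ℕ} (hn : n ≠ 0) (hab : a < b) {g : ℝ → ℝ}
    (hg : ContDiffOn ℝ n g (Icc a b)) {S : Finset ℝ} (hS : S.card = n + 1) (hSI : ↑S ⊆ Icc a b)
    (hz : ∀ y ∈ S, g y = 0) :
    ∃ c ∈ Ioo a b, iteratedDerivWithin n g (Icc a b) c = 0 := by
  obtain ⟨m, rfl⟩ := Nat.exists_eq_succ_of_ne_zero hn
  let e := S.orderIsoOfFin hS
  exact exists_iteratedDerivWithin_eq_zero_of_strictMono hab m (by exact_mod_cast hg)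
    (t := fun i => (e i : ℝ)) (fun i j hij => e.strictMono hij) (fun i => hSI (e i).2)
    (fun i => hz _ (e i).2)

end Rolle

section Chebyshev

variable {n : ℕ} {a b : ℝ}

open Polynomial.Chebyshev

theorem chebNode_neg_one_one (k : Fin n) :
    chebNode n (-1) 1 k = Real.cos ((2 * (k : ℝ) + 1) * Real.pi / (2 * n)) := by
  norm_num [chebNode]

theorem chebNode_eq_add_mul (k : Fin n) :
    chebNode n a b k = (a + b) / 2 + (b - a) / 2 * chebNode n (-1) 1 k := by
  simp [chebNode]

theorem chebNode_neg_one_one_mem_Icc (k : Fin n) : chebNode n (-1) 1 k ∈ Icc (-1) 1 := by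
  rw [chebNode_neg_one_one]
  exact ⟨Real.neg_one_le_cos _, Real.cos_le_one _⟩

theorem chebNode_mem_Icc (hab : a ≤ b) (k : Fin n) : chebNode n a b k ∈ Icc a b := by
  obtain ⟨h₁, h₂⟩ := chebNode_neg_one_one_mem_Icc k
  rw [chebNode_eq_add_mul]
  constructor <;> nlinarith

theorem chebNode_injective (hab : a < b) : Function.Injective (chebNode n a b) := by
  intro k l hkl
  have hcos : Real.cos ((2 * (k : ℝ) + 1) * Real.pi / (2 * n)) =
      Real.cos ((2 * (l : ℝ) + 1) * Real.pi / (2 * n)) := by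
    simp only [chebNode] at hkl
    exact mul_left_cancel₀ (by linarith) (add_left_cancel hkl)
  have hn : (0 : ℝ) < n := by exact_mod_cast k.pos
  have hmem : ∀ i : Fin n, (2 * (i : ℝ) + 1) * Real.pi / (2 * n) ∈ Icc 0 Real.pi := fun i => by
    have : (i : ℝ) + 1 ≤ n := by exact_mod_cast i.isLt
    refine ⟨by positivity, ?_⟩
    rw [div_le_iff₀ (by positivity)]
    nlinarith [Real.pi_pos]
  have := Real.injOn_cos (hmem k) (hmem l) hcos
  field_simp at this
  exact Fin.ext (by exact_mod_cast (by linarith : (k : ℝ) = l))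

theorem T_real_eq_C_mul_nodal_chebNode :
    T ℝ n = C (2 ^ (n - 1) : ℝ) * nodal Finset.univ (chebNode n (-1) 1) := by
  have hroots : (T ℝ n).roots =
      (Finset.range n).val.map fun k : ℕ => Real.cos ((2 * k + 1) * Real.pi / (2 * n)) := by
    rw [roots_T_real, Finset.image_val, Finset.range_val,
      Multiset.dedup_eq_self.2 (roots_T_real_nodup n)]
  have hcard : Multiset.card (T ℝ n).roots = (T ℝ n).natDegree := by
    rw [hroots, natDegree_T]
    simp
  conv_lhs => rw [← C_leadingCoeff_mul_prod_multiset_X_sub_C hcard]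
  rw [leadingCoeff_T, hroots, Multiset.map_map, ← Finset.prod_eq_multiset_prod, nodal_eq]
  simp only [chebNode_neg_one_one, Function.comp_apply, Int.natAbs_natCast]
  rw [Fin.prod_univ_eq_prod_range (fun k => X - C (Real.cos ((2 * k + 1) * Real.pi / (2 * n)))) n]

theorem abs_eval_nodal_chebNode_neg_one_one_le {s : ℝ} (hs : |s| ≤ 1) :
    |(nodal Finset.univ (chebNode n (-1) 1)).eval s| ≤ 1 / 2 ^ (n - 1) := by
  have hT := abs_eval_T_real_le_one n hs
  rw [T_real_eq_C_mul_nodal_chebNode, eval_mul, eval_C, abs_mul, abs_of_pos (by positivity)] at hT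
  rw [le_div_iff₀ (by positivity)]
  linarith

theorem eval_nodal_chebNode (hab : a < b) (x : ℝ) :
    (nodal Finset.univ (chebNode n a b)).eval x =
      ((b - a) / 2) ^ n *
        (nodal Finset.univ (chebNode n (-1) 1)).eval ((2 * x - (a + b)) / (b - a)) := by
  have hba : b - a ≠ 0 := by linarith
  simp only [eval_nodal, ← Finset.card_fin n, ← Finset.prod_const, ← Finset.prod_mul_distrib]
  refine Finset.prod_congr rfl fun k _ => ?_
  rw [chebNode_eq_add_mul]
  field_simp
  ring

theorem abs_eval_nodal_chebNode_le (hab : a < b) {x : ℝ} (hx : x ∈ Icc a b) :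
    |(nodal Finset.univ (chebNode n a b)).eval x| ≤ (b - a) ^ n / 2 ^ (2 * n - 1) := by
  have hs : |(2 * x - (a + b)) / (b - a)| ≤ 1 := by
    rw [abs_div, abs_of_pos (by linarith : 0 < b - a), div_le_one (by linarith), abs_le]
    constructor <;> linarith [hx.1, hx.2]
  have hpow : (2 : ℝ) ^ (2 * n - 1) = 2 ^ n * 2 ^ (n - 1) := by
    rw [← pow_add]; congr 1; omega
  rw [eval_nodal_chebNode hab, abs_mul, abs_pow, abs_of_pos (by linarith : 0 < (b - a) / 2), hpow]
  calc _ ≤ ((b - a) / 2) ^ n * (1 / 2 ^ (n - 1)) := by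
        gcongr; exact abs_eval_nodal_chebNode_neg_one_one_le hs
    _ = (b - a) ^ n / (2 ^ n * 2 ^ (n - 1)) := by rw [div_pow]; field_simp

end Chebyshev

section InterpolationError

variable {n : ℕ} {a b : ℝ}

theorem exists_mul_factorial_eq_eval_nodal_mul_iteratedDerivWithin (hn : n ≠ 0) (hab : a < b)
    {g : ℝ → ℝ} (hg : ContDiffOn ℝ n g (Icc a b)) {t : Fin n → ℝ} (ht : Function.Injective t)
    (htI : ∀ k, t k ∈ Icc a b) (hz : ∀ k, g (t k) = 0) {x : ℝ} (hx : x ∈ Icc a b) :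
    ∃ c ∈ Ioo a b, g x * n.factorial =
      (nodal Finset.univ t).eval x * iteratedDerivWithin n g (Icc a b) c := by
  by_cases hxt : x ∈ range t
  · obtain ⟨k, rfl⟩ := hxt
    refine ⟨(a + b) / 2, ⟨by linarith, by linarith⟩, ?_⟩
    rw [hz, eval_nodal_at_node (Finset.mem_univ k), zero_mul, zero_mul]
  set ω := nodal Finset.univ t
  set G : ℝ → ℝ := (fun y => ω.eval x * g y) - fun y => g x * ω.eval y
  have hU := uniqueDiffOn_Icc hab
  have hω : ContDiff ℝ n fun y => ω.eval y := ω.contDiff_eval _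
  have hG : ContDiffOn ℝ n G (Icc a b) :=
    (contDiffOn_const.mul hg).sub (contDiffOn_const.mul hω.contDiffOn)
  have hcard : (insert x (Finset.univ.image t)).card = n + 1 := by
    rw [Finset.card_insert_of_notMem (by simpa using hxt), Finset.card_image_of_injective _ ht,
      Finset.card_univ, Fintype.card_fin]
  have hSI : ↑(insert x (Finset.univ.image t)) ⊆ Icc a b := by
    simpa [Set.insert_subset_iff, range_subset_iff] using ⟨hx, htI⟩
  have hGz : ∀ y ∈ insert x (Finset.univ.image t), G y = 0 := by
    simp only [Finset.mem_insert, Finset.mem_image, Finset.mem_univ, true_and]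
    rintro y (rfl | ⟨k, rfl⟩)
    · simp only [G, Pi.sub_apply]; ring
    · simp [G, ω, hz, eval_nodal_at_node]
  obtain ⟨c, hc, hc0⟩ := exists_iteratedDerivWithin_eq_zero hn hab hG hcard hSI hGz
  have hcI : c ∈ Icc a b := Ioo_subset_Icc_self hc
  refine ⟨c, hc, ?_⟩
  have hωn : iteratedDerivWithin n (fun y => ω.eval y) (Icc a b) c = n.factorial := by
    simpa [ω, natDegree_nodal] using
      (nodal_monic (s := Finset.univ) (v := t)).iteratedDerivWithin_natDegree_eval hU hcI
  rw [iteratedDerivWithin_sub hcI hU ((contDiffOn_const.mul hg) c hcI)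
      ((contDiffOn_const.mul hω.contDiffOn) c hcI),
    iteratedDerivWithin_const_mul_field, iteratedDerivWithin_const_mul_field, hωn] at hc0
  linarith

theorem exists_norm_mul_factorial_le {E : Type*} [NormedAddCommGroup E] [NormedSpace ℝ E]
    (hn : n ≠ 0) (hab : a < b) {f : ℝ → E} (hf : ContDiffOn ℝ n f (Icc a b)) {t : Fin n → ℝ}
    (ht : Function.Injective t) (htI : ∀ k, t k ∈ Icc a b) (hz : ∀ k, f (t k) = 0) {x : ℝ}
    (hx : x ∈ Icc a b) :
    ∃ c ∈ Ioo a b, ‖f x‖ * n.factorial ≤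
      |(nodal Finset.univ t).eval x| * ‖iteratedDerivWithin n f (Icc a b) c‖ := by
  obtain ⟨L, hL, hLx⟩ := exists_dual_vector'' ℝ (f x)
  obtain ⟨c, hc, hceq⟩ := exists_mul_factorial_eq_eval_nodal_mul_iteratedDerivWithin hn hab
    (hf.continuousLinearMap_comp L) ht htI (by simp [hz]) hx
  rw [L.iteratedDerivWithin_comp_left (hf c (Ioo_subset_Icc_self hc))
    (uniqueDiffOn_Icc hab) (Ioo_subset_Icc_self hc)] at hceq
  refine ⟨c, hc, ?_⟩
  calc ‖f x‖ * n.factorial = L (f x) * n.factorial := by rw [hLx]; rfl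
    _ = (nodal Finset.univ t).eval x * L (iteratedDerivWithin n f (Icc a b) c) := hceq
    _ ≤ |(nodal Finset.univ t).eval x| * ‖L (iteratedDerivWithin n f (Icc a b) c)‖ := by
      rw [Real.norm_eq_abs, ← abs_mul]; exact le_abs_self _
    _ ≤ |(nodal Finset.univ t).eval x| * ‖iteratedDerivWithin n f (Icc a b) c‖ := by
      gcongr; simpa using L.le_of_opNorm_le hL _

end InterpolationError

/-- Chebyshev interpolation error bound. If `u : [a,b] → ℂ` is `n` times
continuously differentiable and `p` is a polynomial of degree at most `n − 1`
interpolating `u` at the `n` mapped Chebyshev nodes, then for all `x ∈ [a,b]`,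
`|u(x) − p(x)| ≤ (b−a)^n / (2^{2n−1} n!) · sup_{c ∈ (a,b)} |u^{(n)}(c)|`. -/
theorem chebyshev_interpolation_error (n : ℕ) (hn : 1 ≤ n) (a b : ℝ) (hab : a < b)
    (u : ℝ → ℂ) (hu : ContDiffOn ℝ n u (Set.Icc a b))
    (p : Polynomial ℂ) (hdeg : p.natDegree ≤ n - 1)
    (hinterp : ∀ k : Fin n, p.eval ((chebNode n a b k : ℝ) : ℂ) = u (chebNode n a b k)) :
    ∀ x ∈ Set.Icc a b,
      ‖u x - p.eval ((x : ℝ) : ℂ)‖ ≤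
        (b - a) ^ n / (2 ^ (2 * n - 1) * (n.factorial : ℝ)) *
          sSup ((fun c => ‖iteratedDerivWithin n u (Set.Icc a b) c‖) '' Set.Ioo a b) := by
  intro x hx
  have hU := uniqueDiffOn_Icc hab
  set P : ℝ → ℂ := fun t => p.eval (t : ℂ)
  have hP : ContDiff ℝ n P := p.contDiff_eval_ofReal
  have hderiv : ∀ c ∈ Icc a b,
      iteratedDerivWithin n (u - P) (Icc a b) c = iteratedDerivWithin n u (Icc a b) c := by
    intro c hc
    rw [iteratedDerivWithin_sub hc hU (hu c hc) hP.contDiffWithinAt,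
      iteratedDerivWithin_eq_iteratedDeriv hU hP.contDiffAt hc, iteratedDeriv_eval_ofReal,
      iterate_derivative_eq_zero (by omega)]
    simp
  obtain ⟨c, hc, hle⟩ := exists_norm_mul_factorial_le (f := u - P) (by omega) hab
    (hu.sub hP.contDiffOn) (chebNode_injective hab) (chebNode_mem_Icc hab.le)
    (fun k => by simp [P, hinterp]) hx
  rw [hderiv c (Ioo_subset_Icc_self hc)] at hle
  have hsup : ‖iteratedDerivWithin n u (Icc a b) c‖ ≤
      sSup ((fun c => ‖iteratedDerivWithin n u (Icc a b) c‖) '' Ioo a b) :=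
    le_csSup ((isCompact_Icc.image_of_continuousOn
      (hu.continuousOn_iteratedDerivWithin le_rfl hU).norm).bddAbove.mono
      (image_mono Ioo_subset_Icc_self)) ⟨c, hc, rfl⟩
  rw [← div_div, div_mul_eq_mul_div, le_div_iff₀ (by positivity)]
  exact hle.trans (mul_le_mul (abs_eval_nodal_chebNode_le hab hx) hsup (norm_nonneg _)
    (by positivity))
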